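/- Let g be a real number. For n ≥ 0 set P_n = L_n^{(g-1/2)} and define the exceptional (X₁) Laguerre polynomial P_{D,n}(η) = (η + g + 1/2)·P_n'(η) - (η + g + 3/2)·P_n(η), with the convention P_{D,m} = 0 for m < 0. Let X(η) = ½ η(η + 2g + 1). Then for every n ≥ 0 the five-term recurrence relation with constant coefficients X(η)·P_{D,n}(η) = Σ_{k=-2}^{2} r_{n,k} P_{D,n+k}(η) holds, where r_{n,2} = ½(n+1)(n+2), r_{n,1} = -(n+1)(2g+2n+3), r_{n,0} = ⅛(24n² + 4(10g+11)n + (2g+1)(6g+13)), r_{n,-1} = -½(2g+2n-1)(2g+2n+3), and r_{n,-2} = ⅛(2g+2n-3)(2g+2n+3). -/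

import Mathlib

/-!
Write `Q_m = L_m^{(g+1/2)}`. The identities `L_n^{(α)} = L_n^{(α+1)} - L_{n-1}^{(α+1)}` and
`(L_{n+1}^{(α)})' = -L_n^{(α+1)}` give `P_{D,m} = Q_{m-1} - (η + g + 3/2) Q_m`, and together
with `η L_n^{(α+1)} = (n+α+1) L_n^{(α)} - (n+1) L_{n+1}^{(α)}` they give the three-term
recurrence of the `Q_m`. Multiplying `P_{D,n}` by the quadratic `X(η)` and eliminating every
`η Q_j` with that recurrence yields the five-term relation. Extended by zero to negative
indices, all these identities hold for every integer index, so one computation also covers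
`n = 0, 1`.
-/

open Polynomial

/-- The Laguerre polynomial `L_n^{(α)}` with real parameter:
`L_n^{(α)}(x) = Σ_{k=0}^{n} (-1)^k (α+k+1)_{n-k} / ((n-k)!·k!) · x^k`. -/
noncomputable def laguerreP (α : ℝ) (n : ℕ) : Polynomial ℝ :=
  ∑ k ∈ Finset.range (n + 1),
    Polynomial.C ((-1 : ℝ) ^ k * (ascPochhammer ℝ (n - k)).eval (α + k + 1) /
        ((n - k).factorial * k.factorial)) * Polynomial.X ^ k

/-- The exceptional (X₁) Laguerre polynomial
`P_{D,n}(η) = (η+g+½) P_n'(η) - (η+g+3/2) P_n(η)` with `P_n = L_n^{(g-1/2)}`. -/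
noncomputable def xLagP (g : ℝ) (n : ℕ) : Polynomial ℝ :=
  (Polynomial.X + Polynomial.C (g + 1/2)) *
      Polynomial.derivative (laguerreP (g - 1/2) n)
    - (Polynomial.X + Polynomial.C (g + 3/2)) * laguerreP (g - 1/2) n

/-- `xLagP` with integer index, with the convention `P_{D,m} = 0` for `m < 0`. -/
noncomputable def xLagPZ (g : ℝ) (m : ℤ) : Polynomial ℝ :=
  if 0 ≤ m then xLagP g m.toNat else 0

theorem ascPochhammer_succ_eval_left {S : Type*} [CommSemiring S] (n : ℕ) (x : S) :
    (ascPochhammer S (n + 1)).eval x = x * (ascPochhammer S n).eval (x + 1) := by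
  rw [ascPochhammer_succ_left, eval_mul, eval_X, eval_comp, eval_add, eval_X, eval_one]

theorem coeff_laguerreP (α : ℝ) (n k : ℕ) :
    (laguerreP α n).coeff k =
      if k ≤ n then (-1 : ℝ) ^ k * (ascPochhammer ℝ (n - k)).eval (α + k + 1) /
        ((n - k).factorial * k.factorial) else 0 := by
  simp only [laguerreP, finsetSum_coeff, coeff_C_mul_X_pow, Finset.sum_ite_eq, Finset.mem_range,
    Nat.lt_succ_iff]

theorem laguerreP_zero (α : ℝ) : laguerreP α 0 = 1 := by
  simp [laguerreP]

theorem laguerreP_succ_eq_sub (α : ℝ) (n : ℕ) :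
    laguerreP α (n + 1) = laguerreP (α + 1) (n + 1) - laguerreP (α + 1) n := by
  ext k
  rw [coeff_sub, coeff_laguerreP, coeff_laguerreP, coeff_laguerreP]
  rcases lt_trichotomy k (n + 1) with hk | rfl | hk
  · obtain ⟨m, rfl⟩ := Nat.exists_eq_add_of_le (Nat.lt_succ_iff.1 hk)
    rw [if_pos (by omega), if_pos (by omega), if_pos (by omega),
      show k + m + 1 - k = m + 1 by omega, Nat.add_sub_cancel_left, ascPochhammer_succ_eval_left,
      show α + k + 1 + 1 = α + 1 + k + 1 by ring, ascPochhammer_succ_eval, Nat.factorial_succ m]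
    push_cast
    field_simp
    ring
  · simp
  · simp [show ¬ k ≤ n + 1 by omega, show ¬ k ≤ n by omega]

theorem derivative_laguerreP_succ (α : ℝ) (n : ℕ) :
    derivative (laguerreP α (n + 1)) = -laguerreP (α + 1) n := by
  ext k
  rw [coeff_derivative, coeff_neg, coeff_laguerreP, coeff_laguerreP]
  by_cases hk : k ≤ n
  · rw [if_pos (by omega), if_pos hk, Nat.add_sub_add_right, Nat.factorial_succ,
      show α + ((k + 1 : ℕ) : ℝ) + 1 = α + 1 + k + 1 by push_cast; ring]
    push_cast
    field_simp
    ring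
  · simp [hk]

theorem X_mul_laguerreP_add_one (α : ℝ) (n : ℕ) :
    X * laguerreP (α + 1) n
      = C (n + α + 1) * laguerreP α n - C (n + 1 : ℝ) * laguerreP α (n + 1) := by
  ext k
  rw [coeff_sub, coeff_C_mul, coeff_C_mul]
  rcases k with _ | k
  · simp [coeff_laguerreP, ascPochhammer_succ_eval, Nat.factorial_succ]
    field_simp
    ring
  · rw [coeff_X_mul, coeff_laguerreP, coeff_laguerreP, coeff_laguerreP]
    rcases lt_trichotomy k n with hk | rfl | hk
    · obtain ⟨m, rfl⟩ := Nat.exists_eq_add_of_lt hk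
      rw [if_pos (by omega), if_pos (by omega), if_pos (by omega),
        show k + m + 1 - k = m + 1 by omega, show k + m + 1 - (k + 1) = m by omega,
        show k + m + 1 + 1 - (k + 1) = m + 1 by omega,
        show α + ((k + 1 : ℕ) : ℝ) + 1 = α + 1 + k + 1 by push_cast; ring,
        ascPochhammer_succ_eval, Nat.factorial_succ m, Nat.factorial_succ k]
      push_cast
      field_simp
      ring
    · simp [Nat.factorial_succ]
      field_simp
      ring
    · simp [show ¬ k ≤ n by omega, show ¬ k + 1 ≤ n by omega,
        show ¬ k + 1 ≤ n + 1 by omega]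

noncomputable def laguerreZ (α : ℝ) (m : ℤ) : ℝ[X] :=
  if 0 ≤ m then laguerreP α m.toNat else 0

@[simp]
theorem laguerreZ_natCast (α : ℝ) (n : ℕ) : laguerreZ α n = laguerreP α n := by
  simp [laguerreZ]

theorem laguerreZ_of_neg (α : ℝ) {m : ℤ} (hm : m < 0) : laguerreZ α m = 0 := by
  simp [laguerreZ, hm.not_ge]

theorem laguerreZ_eq_sub (α : ℝ) (m : ℤ) :
    laguerreZ α m = laguerreZ (α + 1) m - laguerreZ (α + 1) (m - 1) := by
  rcases lt_or_ge m 0 with hm | hm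
  · simp [laguerreZ_of_neg _ hm, laguerreZ_of_neg _ (show m - 1 < 0 by omega)]
  lift m to ℕ using hm
  rcases m with _ | n
  · simp [laguerreZ, laguerreP_zero]
  · rw [show ((n + 1 : ℕ) : ℤ) - 1 = n by omega, laguerreZ_natCast, laguerreZ_natCast,
      laguerreZ_natCast, laguerreP_succ_eq_sub]

theorem derivative_laguerreZ (α : ℝ) (m : ℤ) :
    derivative (laguerreZ α m) = -laguerreZ (α + 1) (m - 1) := by
  rcases lt_or_ge m 0 with hm | hm
  · simp [laguerreZ_of_neg _ hm, laguerreZ_of_neg _ (show m - 1 < 0 by omega)]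
  lift m to ℕ using hm
  rcases m with _ | n
  · simp [laguerreZ, laguerreP_zero]
  · rw [show ((n + 1 : ℕ) : ℤ) - 1 = n by omega, laguerreZ_natCast, laguerreZ_natCast,
      derivative_laguerreP_succ]

theorem X_mul_laguerreZ_add_one (α : ℝ) (m : ℤ) :
    X * laguerreZ (α + 1) m
      = C (m + α + 1) * laguerreZ α m - C (m + 1 : ℝ) * laguerreZ α (m + 1) := by
  rcases lt_or_ge m 0 with hm | hm
  · rcases (show m = -1 ∨ m + 1 < 0 by omega) with rfl | hm'
    · simp [laguerreZ_of_neg]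
    · simp [laguerreZ_of_neg _ hm, laguerreZ_of_neg _ hm']
  lift m to ℕ using hm
  rw [laguerreZ_natCast, laguerreZ_natCast, ← Nat.cast_succ, laguerreZ_natCast,
    X_mul_laguerreP_add_one, Int.cast_natCast]

theorem X_mul_laguerreZ (α : ℝ) (m : ℤ) :
    X * laguerreZ α m
      = C (2 * m + α + 1) * laguerreZ α m - C (m + 1 : ℝ) * laguerreZ α (m + 1)
        - C (m + α) * laguerreZ α (m - 1) := by
  have h₀ := X_mul_laguerreZ_add_one α m
  have h₁ := X_mul_laguerreZ_add_one α (m - 1)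
  push_cast at h₁
  simp only [sub_add_cancel, map_add, map_mul, map_sub, map_intCast, map_one, map_ofNat]
    at h₀ h₁ ⊢
  linear_combination X * laguerreZ_eq_sub α m + h₀ - h₁

theorem xLagPZ_eq_laguerreZ (g : ℝ) (m : ℤ) :
    xLagPZ g m = laguerreZ (g + 1/2) (m - 1) - (X + C (g + 3/2)) * laguerreZ (g + 1/2) m := by
  have hdef : xLagPZ g m = (X + C (g + 1/2)) * derivative (laguerreZ (g - 1/2) m)
      - (X + C (g + 3/2)) * laguerreZ (g - 1/2) m := by
    unfold xLagPZ laguerreZ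
    split_ifs <;> simp [xLagP]
  have hα : g - 1/2 + 1 = g + 1/2 := by ring
  have hC : C (g + 3/2) = C (g + 1/2) + 1 := by rw [← C_1, ← C_add]; congr 1; ring
  rw [hdef, derivative_laguerreZ, laguerreZ_eq_sub (g - 1/2) m, hα]
  linear_combination laguerreZ (g + 1/2) (m - 1) * hC

theorem xLagPZ_five_term_recurrence (g : ℝ) (m : ℤ) :
    C (2 : ℝ)⁻¹ * X * (X + C (2 * g + 1)) * xLagPZ g m
    = C (((m : ℝ) + 1) * ((m : ℝ) + 2) / 2) * xLagPZ g (m + 2)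
      + C (-(((m : ℝ) + 1) * (2 * g + 2 * (m : ℝ) + 3))) * xLagPZ g (m + 1)
      + C ((24 * (m : ℝ) ^ 2 + 4 * (10 * g + 11) * (m : ℝ)
            + (2 * g + 1) * (6 * g + 13)) / 8) * xLagPZ g m
      + C (-((2 * g + 2 * (m : ℝ) - 1) * (2 * g + 2 * (m : ℝ) + 3)) / 2) * xLagPZ g (m - 1)
      + C ((2 * g + 2 * (m : ℝ) - 3) * (2 * g + 2 * (m : ℝ) + 3) / 8) * xLagPZ g (m - 2) := by
  refine Polynomial.funext fun x => ?_
  set q : ℤ → ℝ := fun j => eval x (laguerreZ (g + 1/2) (m + j))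
  have hR (j : ℤ) : x * q j = (2 * (m + j) + g + 3/2) * q j - (m + j + 1) * q (j + 1)
      - (m + j + g + 1/2) * q (j - 1) := by
    have := congrArg (eval x) (X_mul_laguerreZ (g + 1/2) (m + j))
    simp only [eval_mul, eval_sub, eval_C, eval_X, add_assoc, add_sub_assoc] at this
    push_cast at this
    linear_combination this
  have hP (j : ℤ) : eval x (xLagPZ g (m + j)) = q (j - 1) - (x + g + 3/2) * q j := by
    simp only [xLagPZ_eq_laguerreZ, eval_mul, eval_sub, eval_add, eval_C, eval_X, add_sub_assoc, q]
    ring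
  have hP0 := hP 0
  have hPn1 := hP (-1)
  have hPn2 := hP (-2)
  simp only [add_zero, ← sub_eq_add_neg] at hP0 hPn1 hPn2
  simp only [eval_add, eval_mul, eval_C, eval_X, hP 2, hP 1, hP0, hPn1, hPn2]
  have R1 := hR 1
  have R0 := hR 0
  have Rn1 := hR (-1)
  have Rn2 := hR (-2)
  norm_num at R1 R0 Rn1 Rn2 ⊢
  -- the coefficients come from eliminating every `x * q j`, highest power of `x` first
  linear_combination (m + 1) * (x + g + 3/2) / 2 * R1
    - (x ^ 2 / 2 + (m + 2 * g + 2) * x + (g + 2) * m + (12 * g ^ 2 + 28 * g + 23) / 8) * R0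
    + (m + g + 3/2) * (x + g + 7/2) / 2 * Rn1 - (m + g + 3/2) / 2 * Rn2

/-- the five-term recurrence relation with constant coefficients
`X(η)·P_{D,n}(η) = Σ_{k=-2}^{2} r_{n,k} P_{D,n+k}(η)` for the X₁ Laguerre
polynomials, with `X(η) = ½η(η+2g+1)`. -/
theorem xlaguerre_five_term_recurrence (g : ℝ) (n : ℕ) :
    Polynomial.C ((2 : ℝ))⁻¹ * Polynomial.X * (Polynomial.X + Polynomial.C (2 * g + 1))
        * xLagP g n
    = Polynomial.C (((n : ℝ) + 1) * ((n : ℝ) + 2) / 2) * xLagPZ g ((n : ℤ) + 2)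
      + Polynomial.C (-(((n : ℝ) + 1) * (2 * g + 2 * (n : ℝ) + 3))) *
          xLagPZ g ((n : ℤ) + 1)
      + Polynomial.C ((24 * (n : ℝ) ^ 2 + 4 * (10 * g + 11) * (n : ℝ)
            + (2 * g + 1) * (6 * g + 13)) / 8) * xLagPZ g (n : ℤ)
      + Polynomial.C (-((2 * g + 2 * (n : ℝ) - 1) * (2 * g + 2 * (n : ℝ) + 3)) / 2) *
          xLagPZ g ((n : ℤ) - 1)
      + Polynomial.C ((2 * g + 2 * (n : ℝ) - 3) * (2 * g + 2 * (n : ℝ) + 3) / 8) *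
          xLagPZ g ((n : ℤ) - 2) := by
  rw [show xLagP g n = xLagPZ g n by simp [xLagPZ]]
  simpa only [Int.cast_natCast] using xLagPZ_five_term_recurrence g n
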